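/- arXiv:1403.3486 — 3 statements merged into one kernel-verified Lean document; each statement's English description precedes it below -/
import Mathlib

section
/- For every real number r ≥ 0, the series ∑_{j=1}^∞ e^{-r/j}/(j(j+1)) is bounded below by e^{-1}/(r+1). -/
/-!
The weights `1 / (j (j + 1))` sum to `1 / N` over `j ≥ N`. Taking `N = ⌊r⌋ + 1 > r`, every factor
`e^{-r/j}` with `j ≥ N` is at least `e^{-1}`, so the tail from `N` on already contributes at least
`e^{-1} / N ≥ e^{-1} / (r + 1)`.
-/

open Filter Topology

theorem Antitone.hasSum_sub_succ {f : ℕ → ℝ} {a : ℝ} (hf : Antitone f)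
    (hlim : Tendsto f atTop (𝓝 a)) : HasSum (fun n ↦ f n - f (n + 1)) (f 0 - a) := by
  rw [hasSum_iff_tendsto_nat_of_nonneg (fun n ↦ sub_nonneg.2 (hf n.le_succ))]
  simp_rw [Finset.sum_range_sub']
  exact tendsto_const_nhds.sub hlim

section

variable {r c : ℝ}

theorem hasSum_one_div_add_mul_add_add_one (hc : 0 < c) :
    HasSum (fun j : ℕ ↦ 1 / ((j + c) * (j + c + 1))) (1 / c) := by
  have hanti : Antitone fun j : ℕ ↦ 1 / ((j : ℝ) + c) := fun i j hij ↦
    one_div_le_one_div_of_le (by positivity) (by gcongr)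
  have hlim : Tendsto (fun j : ℕ ↦ 1 / ((j : ℝ) + c)) atTop (𝓝 0) := by
    simpa only [one_div, Pi.inv_def] using
      (tendsto_natCast_atTop_atTop.atTop_add tendsto_const_nhds).inv_tendsto_atTop
  convert hanti.hasSum_sub_succ hlim using 1
  · ext j
    push_cast
    field_simp
    ring
  · simp

theorem Real.exp_neg_one_le_exp_neg_div (hc : 0 < c) (hrc : r ≤ c) :
    Real.exp (-1) ≤ Real.exp (-r / c) := by
  rw [Real.exp_le_exp, neg_div, neg_le_neg_iff]
  exact (div_le_one hc).2 hrc

theorem summable_exp_neg_div_mul_add_one (hr : 0 ≤ r) (hc : 0 < c) :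
    Summable fun j : ℕ ↦ Real.exp (-r / (j + c)) / ((j + c) * (j + c + 1)) := by
  refine (hasSum_one_div_add_mul_add_add_one hc).summable.of_nonneg_of_le
    (fun j ↦ by positivity) fun j ↦ div_le_div_of_nonneg_right ?_ (by positivity)
  exact Real.exp_le_one_iff.2 (div_nonpos_of_nonpos_of_nonneg (by linarith) (by positivity))

theorem exp_neg_one_div_le_tsum_exp_neg_div_mul_add_one (hr : 0 ≤ r) (hc : 0 < c)
    (hrc : r ≤ c) :
    Real.exp (-1) / c ≤ ∑' j : ℕ, Real.exp (-r / (j + c)) / ((j + c) * (j + c + 1)) := by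
  have hweights := (hasSum_one_div_add_mul_add_add_one hc).mul_left (Real.exp (-1))
  simp only [mul_one_div] at hweights
  refine hasSum_le (fun j ↦ div_le_div_of_nonneg_right ?_ (by positivity)) hweights
    (summable_exp_neg_div_mul_add_one hr hc).hasSum
  exact Real.exp_neg_one_le_exp_neg_div (by positivity) (by linarith [j.cast_nonneg' (α := ℝ)])

end

/-- For every real `r ≥ 0`, `∑_{j=1}^∞ e^{-r/j}/(j(j+1)) ≥ e^{-1}/(r+1)`. -/
theorem series_exp_lower_bound (r : ℝ) (hr : 0 ≤ r) :
    Real.exp (-1) / (r + 1) ≤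
      ∑' j : ℕ, Real.exp (-r / (j + 1)) / (((j : ℝ) + 1) * ((j : ℝ) + 2)) := by
  set f : ℕ → ℝ := fun j ↦ Real.exp (-r / (j + 1)) / (((j : ℝ) + 1) * ((j : ℝ) + 2))
  have hf : Summable f :=
    (summable_exp_neg_div_mul_add_one hr one_pos).congr fun j ↦ by simp only [f]; ring
  set N := ⌊r⌋₊
  calc Real.exp (-1) / (r + 1) ≤ Real.exp (-1) / (N + 1) := by
        gcongr
        exact Nat.floor_le hr
    _ ≤ ∑' j : ℕ, Real.exp (-r / (j + (N + 1))) / ((j + (N + 1)) * (j + (N + 1) + 1)) :=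
        exp_neg_one_div_le_tsum_exp_neg_div_mul_add_one hr (by positivity)
          (Nat.lt_floor_add_one r).le
    _ = ∑' j, f (j + N) := tsum_congr fun j ↦ by simp only [f, Nat.cast_add, ← add_assoc]; ring
    _ ≤ ∑' j, f j := tsum_comp_le_tsum_of_inj hf (fun j ↦ by positivity) (add_left_injective N)
end

section
/- Let d ≥ 1, 0 < α < 2, and 0 < s ≤ 1 ≤ r. There is a constant c depending only on d such that for every measurable f : ℝ^d → ℝ with ∫∫_{|x-y|≤ s} (f(x)-f(y))^2 |x-y|^{-d-α} dx dy < ∞ and f integrable on B(0, r+1), one has ∫_{B(0,r)} f(x)^2 dx ≤ c [ (s^{d+α}/|B(0,s)|) ∫∫_{|x-y| ≤ s} (f(x)-f(y))^2 |x-y|^{-d-α} dx dy + (1/|B(0,s)|) (∫_{B(0,r+1)} |f(z)| dz)^2 ]. -/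
/-!
For every `x`, `|f x| ≤ ⨍_{B(x,s)} |f x - f y| dy + ⨍_{B(x,s)} |f y| dy`, so by Jensen
`f x ² ≤ 2 ⨍_{B(x,s)} (f x - f y)² dy + 2 (⨍_{B(x,s)} |f|)²`. On `B(x,s)` the kernel
`‖x - y‖^(-p)` is at least `s^(-p)`, which bounds the first term by `s^p / |B(0,s)|` times the
energy density at `x`. For `x ∈ B(0,r)` the ball `B(x,s)` lies in `B(0,r+1)`, so one factor of
the square is at most `|B(0,s)|⁻¹ ∫_{B(0,r+1)} |f|`, and by Fubini and translation invariance the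
other factor integrates over `x` to `∫_{B(0,r+1)} |f|`. Averaging `|f|` rather than `f` keeps the
pointwise step in `ℝ≥0∞`, where no integrability is required.
-/

open MeasureTheory Metric
open scoped ENNReal

theorem sq_lintegral_le_lintegral_sq {α : Type*} [MeasurableSpace α] {ν : Measure α}
    [IsProbabilityMeasure ν] {g : α → ℝ≥0∞} (hg : AEMeasurable g ν) :
    (∫⁻ a, g a ∂ν) ^ 2 ≤ ∫⁻ a, g a ^ 2 ∂ν := by
  have h := ENNReal.lintegral_mul_le_Lp_mul_Lq ν Real.HolderConjugate.two_two hg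
    (aemeasurable_const (b := (1 : ℝ≥0∞)))
  simp only [Pi.mul_apply, mul_one, ENNReal.one_rpow, lintegral_const, measure_univ] at h
  rw [one_div, ENNReal.le_rpow_inv_iff two_pos] at h
  exact_mod_cast h

theorem ofReal_sq_le_two_mul_laverage {α : Type*} [MeasurableSpace α] {ν : Measure α}
    [IsFiniteMeasure ν] [NeZero ν] {g : α → ℝ} (hg : AEMeasurable g ν) (a : ℝ) :
    ENNReal.ofReal (a ^ 2) ≤
      2 * (⨍⁻ y, ENNReal.ofReal ((a - g y) ^ 2) ∂ν + (⨍⁻ y, ENNReal.ofReal |g y| ∂ν) ^ 2) := by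
  simp only [laverage_eq']
  set π := (ν Set.univ)⁻¹ • ν
  have hgπ : AEMeasurable g π := hg.smul_measure _
  have h_triangle : ENNReal.ofReal |a| ≤
      ∫⁻ y, ENNReal.ofReal |a - g y| ∂π + ∫⁻ y, ENNReal.ofReal |g y| ∂π := calc
    ENNReal.ofReal |a| = ∫⁻ _, ENNReal.ofReal |a| ∂π := by simp
    _ ≤ ∫⁻ y, (ENNReal.ofReal |a - g y| + ENNReal.ofReal |g y|) ∂π := by
      refine lintegral_mono fun y => ?_
      rw [← ENNReal.ofReal_add (abs_nonneg _) (abs_nonneg _)]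
      exact ENNReal.ofReal_le_ofReal (by simpa using abs_add_le (a - g y) (g y))
    _ = _ := lintegral_add_right' _ (hgπ.abs.ennreal_ofReal)
  have h_jensen : (∫⁻ y, ENNReal.ofReal |a - g y| ∂π) ^ 2 ≤
      ∫⁻ y, ENNReal.ofReal ((a - g y) ^ 2) ∂π := by
    simpa [← ENNReal.ofReal_pow (abs_nonneg _)] using
      sq_lintegral_le_lintegral_sq (aemeasurable_const.sub hgπ).abs.ennreal_ofReal
  calc ENNReal.ofReal (a ^ 2) = ENNReal.ofReal |a| ^ 2 := by
        rw [← ENNReal.ofReal_pow (abs_nonneg _), sq_abs]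
    _ ≤ _ := pow_le_pow_left' h_triangle 2
    _ ≤ _ := by
      have := ENNReal.rpow_add_le_mul_rpow_add_rpow (∫⁻ y, ENNReal.ofReal |a - g y| ∂π)
        (∫⁻ y, ENNReal.ofReal |g y| ∂π) one_le_two
      norm_num at this
      exact_mod_cast this
    _ ≤ _ := by gcongr

theorem Real.one_le_rpow_mul_rpow_neg {p s t : ℝ} (hp : 0 ≤ p) (ht : 0 < t) (hts : t ≤ s) :
    1 ≤ s ^ p * t ^ (-p) := calc
  1 = t ^ p * t ^ (-p) := by rw [← Real.rpow_add ht, add_neg_cancel, Real.rpow_zero]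
  _ ≤ s ^ p * t ^ (-p) := by gcongr

section BallAverages

variable {E : Type*} [NormedAddCommGroup E] [MeasurableSpace E]

section Invariant

variable [BorelSpace E] {μ : Measure E} [μ.IsAddLeftInvariant]

theorem setLIntegral_ball_eq_setLIntegral_ball_zero (g : E → ℝ≥0∞) (x : E) (s : ℝ) :
    ∫⁻ y in ball x s, g y ∂μ = ∫⁻ y in ball 0 s, g (x + y) ∂μ := by
  have hpre : (x + ·) ⁻¹' ball x s = ball (0 : E) s := by simp [preimage_add_ball]
  rw [← hpre, (measurePreserving_add_left μ x).setLIntegral_comp_preimage_emb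
    (measurableEmbedding_addLeft x)]

variable [SecondCountableTopology E] [SFinite μ]

theorem measurable_setLIntegral_ball {g : E → ℝ≥0∞} (hg : Measurable g) (s : ℝ) :
    Measurable fun x => ∫⁻ y in ball x s, g y ∂μ := by
  rw [funext fun x => setLIntegral_ball_eq_setLIntegral_ball_zero g x s]
  exact (hg.comp (measurable_fst.add measurable_snd)).lintegral_prod_right'

theorem lintegral_setLIntegral_ball {g : E → ℝ≥0∞} (hg : Measurable g) (s : ℝ) :
    ∫⁻ x, ∫⁻ y in ball x s, g y ∂μ ∂μ = μ (ball 0 s) * ∫⁻ y, g y ∂μ := by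
  rw [lintegral_congr fun x => setLIntegral_ball_eq_setLIntegral_ball_zero g x s]
  rw [lintegral_lintegral_swap (f := fun x y => g (x + y))
    (hg.comp (measurable_fst.add measurable_snd)).aemeasurable]
  simp_rw [add_comm _ (_ : E), lintegral_add_left_eq_self]
  rw [setLIntegral_const, mul_comm]

end Invariant

theorem setLIntegral_ball_sq_sub_le [OpensMeasurableSpace E] (μ : Measure E) {p s : ℝ}
    (hp : 0 ≤ p) (u : E → ℝ) (x : E) :
    ∫⁻ y in ball x s, ENNReal.ofReal ((u x - u y) ^ 2) ∂μ ≤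
      ENNReal.ofReal (s ^ p) *
        ∫⁻ y in closedBall x s, ENNReal.ofReal ((u x - u y) ^ 2 * ‖x - y‖ ^ (-p)) ∂μ := by
  rw [← lintegral_const_mul' _ _ ENNReal.ofReal_ne_top]
  refine (setLIntegral_mono' measurableSet_ball fun y hy => ?_).trans
    (lintegral_mono_set ball_subset_closedBall)
  rw [← ENNReal.ofReal_mul' (by positivity)]
  refine ENNReal.ofReal_le_ofReal ?_
  rcases eq_or_ne y x with rfl | hyx
  · simp
  have hdist : 0 < ‖x - y‖ := norm_pos_iff.2 (sub_ne_zero.2 hyx.symm)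
  have hlt : ‖x - y‖ ≤ s := by rw [← dist_eq_norm, dist_comm]; exact (mem_ball.1 hy).le
  calc (u x - u y) ^ 2 = (u x - u y) ^ 2 * 1 := (mul_one _).symm
    _ ≤ (u x - u y) ^ 2 * (s ^ p * ‖x - y‖ ^ (-p)) := by
      gcongr; exact Real.one_le_rpow_mul_rpow_neg hp hdist hlt
    _ = _ := by ring

noncomputable def truncatedJumpEnergy (μ : Measure E) (p s : ℝ) (u : E → ℝ) : ℝ≥0∞ :=
  ∫⁻ x, ∫⁻ y in closedBall x s, ENNReal.ofReal ((u x - u y) ^ 2 * ‖x - y‖ ^ (-p)) ∂μ ∂μ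

theorem ofReal_sq_le_of_ball_subset [BorelSpace E] [ProperSpace E] (μ : Measure E)
    [μ.IsAddHaarMeasure] {p s : ℝ} (hp : 0 ≤ p) (hs : 0 < s) {u : E → ℝ} (hu : Measurable u)
    {x : E} {K : Set E} (hK : ball x s ⊆ K) :
    ENNReal.ofReal (u x ^ 2) ≤
      2 * ENNReal.ofReal (s ^ p) / μ (ball 0 s) *
          ∫⁻ y in closedBall x s, ENNReal.ofReal ((u x - u y) ^ 2 * ‖x - y‖ ^ (-p)) ∂μ +
        2 * (∫⁻ y in K, ENNReal.ofReal |u y| ∂μ) / μ (ball 0 s) ^ 2 *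
          ∫⁻ y in ball x s, ENNReal.ofReal |u y| ∂μ := by
  set V := μ (ball (0 : E) s)
  set W := ∫⁻ y in ball x s, ENNReal.ofReal |u y| ∂μ
  have : IsFiniteMeasure (μ.restrict (ball x s)) :=
    isFiniteMeasure_restrict.2 measure_ball_lt_top.ne
  have : NeZero (μ.restrict (ball x s)) := ⟨by simpa using (measure_ball_pos μ x hs).ne'⟩
  refine (ofReal_sq_le_two_mul_laverage (ν := μ.restrict (ball x s)) hu.aemeasurable (u x)).trans ?_
  rw [setLAverage_eq, setLAverage_eq, Measure.addHaar_ball_center]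
  simp only [div_eq_mul_inv, mul_add]
  gcongr ?_ + ?_
  · calc 2 * ((∫⁻ y in ball x s, ENNReal.ofReal ((u x - u y) ^ 2) ∂μ) * V⁻¹)
        ≤ 2 * ((ENNReal.ofReal (s ^ p) *
            ∫⁻ y in closedBall x s, ENNReal.ofReal ((u x - u y) ^ 2 * ‖x - y‖ ^ (-p)) ∂μ) *
              V⁻¹) := by gcongr; exact setLIntegral_ball_sq_sub_le μ hp u x
      _ = _ := by ring
  · calc 2 * (W * V⁻¹) ^ 2 = 2 * (V ^ 2)⁻¹ * W * W := by rw [ENNReal.inv_pow]; ring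
      _ ≤ 2 * (V ^ 2)⁻¹ * (∫⁻ y in K, ENNReal.ofReal |u y| ∂μ) * W := by
        gcongr; exact lintegral_mono_set hK
      _ = _ := by ring

theorem lintegral_ball_sq_le_truncatedJumpEnergy [BorelSpace E] [ProperSpace E]
    (μ : Measure E) [μ.IsAddHaarMeasure] {p s r R : ℝ} (hp : 0 ≤ p) (hs : 0 < s)
    (hR : r + s ≤ R) {u : E → ℝ} (hu : Measurable u) (z : E) :
    ∫⁻ x in ball z r, ENNReal.ofReal (u x ^ 2) ∂μ ≤
      2 * (ENNReal.ofReal (s ^ p) / μ (ball 0 s) * truncatedJumpEnergy μ p s u +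
        (∫⁻ y in ball z R, ENNReal.ofReal |u y| ∂μ) ^ 2 / μ (ball 0 s)) := by
  set V := μ (ball (0 : E) s)
  set L := ∫⁻ y in ball z R, ENNReal.ofReal |u y| ∂μ
  set G := (ball z R).indicator fun y => ENNReal.ofReal |u y|
  have hV0 : V ≠ 0 := (measure_ball_pos μ 0 hs).ne'
  have hVtop : V ≠ ∞ := measure_ball_lt_top.ne
  have hG : Measurable G := hu.abs.ennreal_ofReal.indicator measurableSet_ball
  have pointwise : ∀ x ∈ ball z r, ENNReal.ofReal (u x ^ 2) ≤
      2 * ENNReal.ofReal (s ^ p) / V *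
          ∫⁻ y in closedBall x s, ENNReal.ofReal ((u x - u y) ^ 2 * ‖x - y‖ ^ (-p)) ∂μ +
        2 * L / V ^ 2 * ∫⁻ y in ball x s, G y ∂μ := fun x hx => by
    have hsub : ball x s ⊆ ball z R := ball_subset_ball' (by linarith [mem_ball.1 hx])
    rw [setLIntegral_indicator measurableSet_ball, Set.inter_eq_right.2 hsub]
    exact ofReal_sq_le_of_ball_subset μ hp hs hu hsub
  have hGball : ∫⁻ x in ball z r, ∫⁻ y in ball x s, G y ∂μ ∂μ ≤ V * L := calc
    _ ≤ ∫⁻ x, ∫⁻ y in ball x s, G y ∂μ ∂μ := setLIntegral_le_lintegral _ _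
    _ = V * L := by rw [lintegral_setLIntegral_ball hG, lintegral_indicator measurableSet_ball]
  calc ∫⁻ x in ball z r, ENNReal.ofReal (u x ^ 2) ∂μ
      ≤ ∫⁻ x in ball z r, (2 * ENNReal.ofReal (s ^ p) / V *
          ∫⁻ y in closedBall x s, ENNReal.ofReal ((u x - u y) ^ 2 * ‖x - y‖ ^ (-p)) ∂μ +
        2 * L / V ^ 2 * ∫⁻ y in ball x s, G y ∂μ) ∂μ :=
        setLIntegral_mono' measurableSet_ball pointwise
    _ = 2 * ENNReal.ofReal (s ^ p) / V * ∫⁻ x in ball z r,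
          ∫⁻ y in closedBall x s, ENNReal.ofReal ((u x - u y) ^ 2 * ‖x - y‖ ^ (-p)) ∂μ ∂μ +
        2 * L / V ^ 2 * ∫⁻ x in ball z r, ∫⁻ y in ball x s, G y ∂μ ∂μ := by
      rw [lintegral_add_right' _ ((measurable_setLIntegral_ball hG s).const_mul _).aemeasurable,
        lintegral_const_mul' _ _ (ENNReal.div_ne_top (by finiteness) hV0),
        lintegral_const_mul _ (measurable_setLIntegral_ball hG s)]
    _ ≤ 2 * ENNReal.ofReal (s ^ p) / V * truncatedJumpEnergy μ p s u +
          2 * L / V ^ 2 * (V * L) := by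
      gcongr
      exact setLIntegral_le_lintegral _ _
    _ = _ := by
      have hV : (V⁻¹) ^ 2 * V = V⁻¹ := by
        rw [pow_two, mul_assoc, ENNReal.inv_mul_cancel hV0 hVtop, mul_one]
      simp only [div_eq_mul_inv, ENNReal.inv_pow]
      rw [show 2 * L * V⁻¹ ^ 2 * (V * L) = 2 * L ^ 2 * (V⁻¹ ^ 2 * V) by ring, hV]
      ring

theorem integral_ball_sq_le_truncatedJumpEnergy [BorelSpace E] [ProperSpace E]
    (μ : Measure E) [μ.IsAddHaarMeasure] {p s r R : ℝ} (hp : 0 ≤ p) (hs : 0 < s)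
    (hR : r + s ≤ R) {u : E → ℝ} (hu : Measurable u) {z : E}
    (hE : truncatedJumpEnergy μ p s u ≠ ∞) (hint : IntegrableOn u (ball z R) μ) :
    ∫ x in ball z r, u x ^ 2 ∂μ ≤
      2 * (s ^ p / (μ (ball 0 s)).toReal * (truncatedJumpEnergy μ p s u).toReal +
        (μ (ball 0 s)).toReal⁻¹ * (∫ y in ball z R, |u y| ∂μ) ^ 2) := by
  have hV0 : μ (ball 0 s) ≠ 0 := (measure_ball_pos μ 0 hs).ne'
  have hL : ∫⁻ y in ball z R, ENNReal.ofReal |u y| ∂μ =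
      ENNReal.ofReal (∫ y in ball z R, |u y| ∂μ) :=
    (ofReal_integral_eq_lintegral_ofReal hint.abs (.of_forall fun _ => abs_nonneg _)).symm
  have key := lintegral_ball_sq_le_truncatedJumpEnergy μ hp hs hR hu z
  rw [hL] at key
  calc ∫ x in ball z r, u x ^ 2 ∂μ = (∫⁻ x in ball z r, ENNReal.ofReal (u x ^ 2) ∂μ).toReal :=
        integral_eq_lintegral_of_nonneg_ae (.of_forall fun _ => sq_nonneg _)
          (hu.pow_const 2).aestronglyMeasurable
    _ ≤ _ := ENNReal.toReal_mono (by finiteness) key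
    _ = _ := by
      rw [ENNReal.toReal_mul, ENNReal.toReal_add (by finiteness) (by finiteness)]
      simp only [ENNReal.toReal_mul, ENNReal.toReal_div, ENNReal.toReal_pow,
        ENNReal.toReal_ofNat, ENNReal.toReal_ofReal (Real.rpow_nonneg hs.le p),
        ENNReal.toReal_ofReal (integral_nonneg fun _ => abs_nonneg _)]
      ring

end BallAverages

theorem local_super_poincare_fractional_general (d : ℕ) :
    ∃ c > (0 : ℝ), ∀ (α s r : ℝ), 0 < α → α < 2 → 0 < s → s ≤ 1 → 1 ≤ r →
      ∀ f : EuclideanSpace ℝ (Fin d) → ℝ, Measurable f →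
      (∫⁻ x, ∫⁻ y in closedBall x s,
          ENNReal.ofReal ((f x - f y) ^ 2 * ‖x - y‖ ^ (-((d : ℝ) + α)))
            ∂volume ∂volume) ≠ ⊤ →
      IntegrableOn f (ball (0 : EuclideanSpace ℝ (Fin d)) (r + 1)) volume →
      ∫ x in ball (0 : EuclideanSpace ℝ (Fin d)) r, (f x) ^ 2 ≤
        c * (s ^ ((d : ℝ) + α) / (volume (ball (0 : EuclideanSpace ℝ (Fin d)) s)).toReal *
              (∫⁻ x, ∫⁻ y in closedBall x s,
                ENNReal.ofReal ((f x - f y) ^ 2 * ‖x - y‖ ^ (-((d : ℝ) + α)))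
                  ∂volume ∂volume).toReal +
            (volume (ball (0 : EuclideanSpace ℝ (Fin d)) s)).toReal⁻¹ *
              (∫ z in ball (0 : EuclideanSpace ℝ (Fin d)) (r + 1), |f z|) ^ 2) :=
  ⟨2, two_pos, fun α s r hα _ hs hs1 _ f hf hE hint =>
    integral_ball_sq_le_truncatedJumpEnergy volume (by positivity) hs (by linarith) hf hE hint⟩

/-- Local super Poincaré inequality for the truncated fractional Dirichlet form:
there is a constant `c` depending only on `d` such that for every `0 < α < 2`,
`0 < s ≤ 1 ≤ r`, and every measurable `f` with finite truncated form and
integrable on `B(0, r+1)`,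
`∫_{B(0,r)} f² ≤ c [ s^{d+α}/|B(0,s)| · ∫∫_{|x-y|≤s} (f(x)-f(y))²|x-y|^{-d-α}
  + |B(0,s)|⁻¹ (∫_{B(0,r+1)} |f|)² ]`. -/
theorem local_super_poincare_fractional (d : ℕ) (hd : 1 ≤ d) :
    ∃ c > (0 : ℝ), ∀ (α s r : ℝ), 0 < α → α < 2 → 0 < s → s ≤ 1 → 1 ≤ r →
      ∀ f : EuclideanSpace ℝ (Fin d) → ℝ, Measurable f →
      (∫⁻ x, ∫⁻ y in closedBall x s,
          ENNReal.ofReal ((f x - f y) ^ 2 * ‖x - y‖ ^ (-((d : ℝ) + α)))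
            ∂volume ∂volume) ≠ ⊤ →
      IntegrableOn f (ball (0 : EuclideanSpace ℝ (Fin d)) (r + 1)) volume →
      ∫ x in ball (0 : EuclideanSpace ℝ (Fin d)) r, (f x) ^ 2 ≤
        c * (s ^ ((d : ℝ) + α) / (volume (ball (0 : EuclideanSpace ℝ (Fin d)) s)).toReal *
              (∫⁻ x, ∫⁻ y in closedBall x s,
                ENNReal.ofReal ((f x - f y) ^ 2 * ‖x - y‖ ^ (-((d : ℝ) + α)))
                  ∂volume ∂volume).toReal +
            (volume (ball (0 : EuclideanSpace ℝ (Fin d)) s)).toReal⁻¹ *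
              (∫ z in ball (0 : EuclideanSpace ℝ (Fin d)) (r + 1), |f z|) ^ 2) :=
  local_super_poincare_fractional_general d
end

section
/- Let d ≥ 1, α > 0, k_0 > 0 with d·k_0/α > 2. Let r_n = n^{-k_0/α + 1/d} and x_n ∈ ℝ^d with |x_n| = n^{k_0} for n ≥ 1, and A = ⋃_{n≥1} B(x_n, r_n). Then for every ε with 2/k_0 < ε, there exists a constant C > 0 such that for all R ≥ 2, |{x ∈ A : |x| ≥ R}| ≤ C · R^{-(d/α - ε)}. -/
/-!
A point `y` with `‖y‖ ≥ R` in the ball of radius `n ^ ρ ≤ 1` around `x n` forces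
`n ^ k₀ ≥ ‖x n‖ ≥ R - 1 ≥ R / 2`, so the tail is covered by the balls with `n ^ k₀ ≥ R / 2`.
Their volumes are `c · n ^ (-β)` with `β = d k₀ / α - 1 > 1`. For `0 ≤ γ < (β - 1) / k₀` split
`n ^ (-β) = n ^ (-(1 + η)) · (n ^ k₀) ^ (-γ)` with `η = β - 1 - k₀ γ > 0`: the first factor is
summable and the second is at most `(R / 2) ^ (-γ)`. Since `(β - 1) / k₀ = d / α - 2 / k₀`, the
condition `ε > 2 / k₀` is what allows `γ ≥ d / α - ε`.
-/

open MeasureTheory Metric Set Module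
open scoped ENNReal

lemma sep_mem_biUnion_ball_le_norm_subset {ι E : Type*} [SeminormedAddCommGroup E]
    (s : Set ι) (x : ι → E) (r : ι → ℝ) (R : ℝ) :
    {y ∈ ⋃ i ∈ s, ball (x i) (r i) | R ≤ ‖y‖} ⊆
      ⋃ i ∈ {i ∈ s | R ≤ ‖x i‖ + r i}, ball (x i) (r i) := by
  rintro y ⟨hy, hRy⟩
  obtain ⟨i, hi, hyi⟩ := mem_iUnion₂.1 hy
  refine mem_iUnion₂.2 ⟨i, ⟨hi, ?_⟩, hyi⟩
  have hyx : ‖y - x i‖ < r i := by rw [← dist_eq_norm]; exact hyi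
  linarith [norm_le_norm_add_norm_sub' y (x i)]

lemma ENNReal.exists_pos_mul_ofReal_le_ofReal_mul {C : ℝ≥0∞} (hC : C ≠ ⊤) :
    ∃ C' > (0 : ℝ), ∀ t : ℝ, 0 ≤ t → C * ENNReal.ofReal t ≤ ENNReal.ofReal (C' * t) := by
  refine ⟨C.toReal + 1, by positivity, fun t ht => ?_⟩
  rw [ENNReal.ofReal_mul (by positivity)]
  refine mul_le_mul_left ?_ _
  rw [← ENNReal.ofReal_toReal hC]
  exact ENNReal.ofReal_le_ofReal (by simp)

lemma exists_tsum_rpow_neg_le_of_le_rpow {k β q : ℝ} (hk : 0 < k) (hβ : 1 < β)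
    (hq : q < (β - 1) / k) :
    ∃ C : ℝ≥0∞, C ≠ ⊤ ∧ ∀ R : ℝ, 1 ≤ R →
      ∑' n : {n : ℕ | R ≤ (n : ℝ) ^ k}, ENNReal.ofReal ((n : ℝ) ^ (-β)) ≤
        C * ENNReal.ofReal (R ^ (-q)) := by
  set γ := max q 0
  have hγ : k * γ < β - 1 := (lt_div_iff₀' hk).1 (max_lt hq (div_pos (by linarith) hk))
  set η := β - 1 - k * γ
  have hη : 0 < η := by linarith
  have hS : Summable fun n : ℕ => (n : ℝ) ^ (-(1 + η)) :=
    Real.summable_nat_rpow.2 (by linarith)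
  refine ⟨∑' n : ℕ, ENNReal.ofReal ((n : ℝ) ^ (-(1 + η))), ?_, fun R hR => ?_⟩
  · rw [← ENNReal.ofReal_tsum_of_nonneg (fun n => by positivity) hS]
    exact ENNReal.ofReal_ne_top
  have hterm (n : {n : ℕ | R ≤ (n : ℝ) ^ k}) :
      (n : ℝ) ^ (-β) ≤ (n : ℝ) ^ (-(1 + η)) * R ^ (-q) := by
    obtain ⟨n, hRn⟩ := n
    have hn : (0 : ℝ) < n := by
      rcases Nat.eq_zero_or_pos n with rfl | h
      · simp only [mem_ofPred_eq, CharP.cast_eq_zero, Real.zero_rpow hk.ne'] at hRn; linarith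
      · exact_mod_cast h
    calc (n : ℝ) ^ (-β) = (n : ℝ) ^ (-(1 + η)) * ((n : ℝ) ^ k) ^ (-γ) := by
          rw [← Real.rpow_mul hn.le, ← Real.rpow_add hn]; congr 1; simp only [η]; ring
      _ ≤ (n : ℝ) ^ (-(1 + η)) * R ^ (-γ) := by
          gcongr _ * ?_
          exact Real.rpow_le_rpow_of_nonpos (by linarith) hRn (neg_nonpos.2 (le_max_right q 0))
      _ ≤ (n : ℝ) ^ (-(1 + η)) * R ^ (-q) := by
          gcongr
          exact le_max_left q 0
  calc ∑' n : {n : ℕ | R ≤ (n : ℝ) ^ k}, ENNReal.ofReal ((n : ℝ) ^ (-β))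
      ≤ ∑' n : {n : ℕ | R ≤ (n : ℝ) ^ k},
          ENNReal.ofReal ((n : ℝ) ^ (-(1 + η))) * ENNReal.ofReal (R ^ (-q)) :=
        ENNReal.tsum_le_tsum fun n => by
          rw [← ENNReal.ofReal_mul (by positivity)]; exact ENNReal.ofReal_le_ofReal (hterm n)
    _ = (∑' n : {n : ℕ | R ≤ (n : ℝ) ^ k}, ENNReal.ofReal ((n : ℝ) ^ (-(1 + η)))) *
          ENNReal.ofReal (R ^ (-q)) := ENNReal.tsum_mul_right
    _ ≤ _ := mul_le_mul_left (ENNReal.tsum_comp_le_tsum_of_injective Subtype.val_injective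
          fun n : ℕ => ENNReal.ofReal ((n : ℝ) ^ (-(1 + η)))) _

theorem exists_measure_tail_biUnion_ball_rpow_le {E : Type*} [NormedAddCommGroup E]
    [NormedSpace ℝ E] [MeasurableSpace E] [BorelSpace E] [FiniteDimensional ℝ E]
    (μ : Measure E) [μ.IsAddHaarMeasure] {k ρ q : ℝ} (hk : 0 < k)
    (hρ : 1 < -ρ * finrank ℝ E) (hq : q < (-ρ * finrank ℝ E - 1) / k)
    (x : ℕ → E) (hx : ∀ n : ℕ, 1 ≤ n → ‖x n‖ ≤ (n : ℝ) ^ k) :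
    ∃ C > (0 : ℝ), ∀ R : ℝ, 2 ≤ R →
      μ {y ∈ ⋃ n ∈ {n : ℕ | 1 ≤ n}, ball (x n) ((n : ℝ) ^ ρ) | R ≤ ‖y‖} ≤
        ENNReal.ofReal (C * R ^ (-q)) := by
  have : Nontrivial E := Module.nontrivial_of_finrank_pos (R := ℝ)
    (Nat.pos_of_ne_zero fun h => by norm_num [h] at hρ)
  have hρ0 : ρ ≤ 0 := by
    by_contra h; nlinarith [(Nat.cast_nonneg (finrank ℝ E) : (0 : ℝ) ≤ finrank ℝ E)]
  set c := μ (ball 0 1)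
  have hvol (n : ℕ) : μ (ball (x n) ((n : ℝ) ^ ρ)) =
      ENNReal.ofReal ((n : ℝ) ^ (-(-ρ * finrank ℝ E))) * c := by
    rw [Measure.addHaar_ball μ _ (by positivity), ← Real.rpow_natCast, ← Real.rpow_mul
      (Nat.cast_nonneg n), neg_mul, neg_neg]
  have hidx (R : ℝ) (hR : 2 ≤ R) :
      {n ∈ {n : ℕ | 1 ≤ n} | R ≤ ‖x n‖ + (n : ℝ) ^ ρ} ⊆ {n : ℕ | R / 2 ≤ (n : ℝ) ^ k} := by
    rintro n ⟨hn, hRn⟩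
    have : (n : ℝ) ^ ρ ≤ 1 := Real.rpow_le_one_of_one_le_of_nonpos (by exact_mod_cast hn) hρ0
    change R / 2 ≤ (n : ℝ) ^ k
    linarith [hx n hn]
  obtain ⟨C, hC, hsum⟩ := exists_tsum_rpow_neg_le_of_le_rpow hk hρ hq
  obtain ⟨C', hC', hC'le⟩ := ENNReal.exists_pos_mul_ofReal_le_ofReal_mul
    (C := C * c * ENNReal.ofReal (2 ^ q)) (by finiteness)
  refine ⟨C', hC', fun R hR => ?_⟩
  calc μ {y ∈ ⋃ n ∈ {n : ℕ | 1 ≤ n}, ball (x n) ((n : ℝ) ^ ρ) | R ≤ ‖y‖}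
      ≤ μ (⋃ n ∈ {n : ℕ | R / 2 ≤ (n : ℝ) ^ k}, ball (x n) ((n : ℝ) ^ ρ)) :=
        measure_mono ((sep_mem_biUnion_ball_le_norm_subset _ _ _ R).trans
          (biUnion_subset_biUnion_left (hidx R hR)))
    _ ≤ ∑' n : {n : ℕ | R / 2 ≤ (n : ℝ) ^ k}, μ (ball (x n) ((n : ℝ) ^ ρ)) :=
        measure_biUnion_le μ (to_countable _) _
    _ = (∑' n : {n : ℕ | R / 2 ≤ (n : ℝ) ^ k},
          ENNReal.ofReal ((n : ℝ) ^ (-(-ρ * finrank ℝ E)))) * c := by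
        simp only [hvol, ENNReal.tsum_mul_right]
    _ ≤ C * ENNReal.ofReal ((R / 2) ^ (-q)) * c := mul_le_mul_left (hsum _ (by linarith)) _
    _ = C * c * ENNReal.ofReal (2 ^ q) * ENNReal.ofReal (R ^ (-q)) := by
        rw [Real.div_rpow (by linarith) zero_le_two, Real.rpow_neg zero_le_two, div_inv_eq_mul,
          ENNReal.ofReal_mul (by positivity)]
        ring
    _ ≤ ENNReal.ofReal (C' * R ^ (-q)) := hC'le _ (by positivity)

theorem union_balls_tail_measure_general (d : ℕ) (α k₀ : ℝ)
    (hk₀ : 0 < k₀) (hdk : 2 < (d : ℝ) * k₀ / α)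
    (x : ℕ → EuclideanSpace ℝ (Fin d)) (hx : ∀ n : ℕ, 1 ≤ n → ‖x n‖ = (n : ℝ) ^ k₀)
    (A : Set (EuclideanSpace ℝ (Fin d)))
    (hA : A = ⋃ n ∈ {n : ℕ | 1 ≤ n}, ball (x n) ((n : ℝ) ^ (-k₀ / α + 1 / (d : ℝ)))) :
    ∀ ε : ℝ, 2 / k₀ < ε → ∃ C > (0 : ℝ), ∀ R : ℝ, 2 ≤ R →
      volume {y ∈ A | R ≤ ‖y‖} ≤ ENNReal.ofReal (C * R ^ (-((d : ℝ) / α - ε))) := by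
  intro ε hε
  have hd : (d : ℝ) ≠ 0 := by rintro h; norm_num [h] at hdk
  have hβ : -(-k₀ / α + 1 / (d : ℝ)) * finrank ℝ (EuclideanSpace ℝ (Fin d)) =
      d * k₀ / α - 1 := by
    rw [finrank_euclideanSpace_fin]; field_simp; ring
  have hq : (d : ℝ) / α - ε < (d * k₀ / α - 1 - 1) / k₀ := by
    rw [lt_div_iff₀ hk₀, sub_mul, div_mul_eq_mul_div]
    linarith [(div_lt_iff₀ hk₀).1 hε]
  subst hA
  exact exists_measure_tail_biUnion_ball_rpow_le volume hk₀ (by rw [hβ]; linarith)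
    (by rwa [hβ]) x fun n hn => (hx n hn).le

/-- Measure decay of the union of shrinking balls `A = ⋃_{n≥1} B(x_n, r_n)` with
`|x_n| = n^{k₀}` and `r_n = n^{-k₀/α + 1/d}`: for every `ε > 2/k₀` there is `C > 0`
with `|{x ∈ A : |x| ≥ R}| ≤ C R^{-(d/α - ε)}` for all `R ≥ 2`. -/
theorem union_balls_tail_measure (d : ℕ) (hd : 1 ≤ d) (α k₀ : ℝ) (hα : 0 < α)
    (hk₀ : 0 < k₀) (hdk : 2 < (d : ℝ) * k₀ / α)
    (x : ℕ → EuclideanSpace ℝ (Fin d)) (hx : ∀ n : ℕ, 1 ≤ n → ‖x n‖ = (n : ℝ) ^ k₀)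
    (A : Set (EuclideanSpace ℝ (Fin d)))
    (hA : A = ⋃ n ∈ {n : ℕ | 1 ≤ n}, ball (x n) ((n : ℝ) ^ (-k₀ / α + 1 / (d : ℝ)))) :
    ∀ ε : ℝ, 2 / k₀ < ε → ∃ C > (0 : ℝ), ∀ R : ℝ, 2 ≤ R →
      volume {y ∈ A | R ≤ ‖y‖} ≤ ENNReal.ofReal (C * R ^ (-((d : ℝ) / α - ε))) :=
  union_balls_tail_measure_general d α k₀ hk₀ hdk x hx A hA
end
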